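/- Let c < 0, −2c²/9 < g ≤ 0 (so that c² + 4g > 0), ε ∈ {−1, 1}, and let d be a constant with φ₀^- < d < c/2. Let I be an open interval containing 0 and let φ : I → ℝ be differentiable with φ(0) = d such that for every ξ ∈ I: φ₀^- < φ(ξ) < c/2, φ(ξ)² + l₁φ(ξ) + l₂ > 0, 2√(φ(ξ)² + l₁φ(ξ) + l₂) + 2φ(ξ) + l₁ > 0, 2√(a₁)·√(φ(ξ)² + l₁φ(ξ) + l₂) + b₁φ(ξ) + l₃ > 0, and φ′(ξ) = ε·(φ(ξ) − φ₀^-)·√(φ(ξ)² + l₁φ(ξ) + l₂)/(2φ(ξ)). Then β₁(φ(ξ)) = β₁(d)·exp(εξ/2) for all ξ ∈ I. (The case ε = −1 is the kink-like wave solution φ₅ of equation (3.11), and ε = 1 is the antikink-like wave solution φ₆ of equation (3.12).) -/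

import Mathlib

/-!
Up to a constant factor, `β₁ = exp ∫ x dx / ((x - φ₀^-) √Q)` with `Q = x² + l₁x + l₂`: the log
of the first factor of `β₁` is Euler's antiderivative of `1 / √Q`, and the log of the power
`((x - φ₀^-) / (…))^α₁` is the standard antiderivative of `φ₀^- / ((x - φ₀^-) √Q)`, because
`√a₁ = √(Q φ₀^-)` and `α₁ √a₁ = φ₀^-`. Hence `β₁' (x) = β₁ (x) · x / ((x - φ₀^-) √Q (x))`, and
along the orbit equation the chain rule gives `(β₁ ∘ φ)' = (ε / 2) (β₁ ∘ φ)`, which on the interval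
`I` integrates to `β₁ (φ ξ) = β₁ (φ 0) · exp (ε ξ / 2)`.
-/

open Real

section LogDeriv

variable {f g : ℝ → ℝ} {k m x : ℝ}

theorem HasDerivAt.rpow_const_logDeriv (hf : HasDerivAt f (k * f x) x) (hfx : 0 < f x)
    (α : ℝ) : HasDerivAt (fun y => f y ^ α) (α * k * f x ^ α) x := by
  convert hf.rpow_const (p := α) (Or.inl hfx.ne') using 1
  rw [Real.rpow_sub_one hfx.ne']
  field_simp

theorem HasDerivAt.mul_logDeriv (hf : HasDerivAt f (k * f x) x)
    (hg : HasDerivAt g (m * g x) x) :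
    HasDerivAt (fun y => f y * g y) ((k + m) * (f x * g x)) x :=
  (hf.mul hg).congr_deriv (by ring)

theorem HasDerivAt.div_logDeriv (hf : HasDerivAt f (k * f x) x)
    (hg : HasDerivAt g (m * g x) x) (hgx : g x ≠ 0) :
    HasDerivAt (fun y => f y / g y) ((k - m) * (f x / g x)) x :=
  (hf.div hg hgx).congr_deriv (by field_simp)

theorem Convex.eq_mul_exp_of_hasDerivAt_mul_self {I : Set ℝ} (hI : Convex ℝ I) {a : ℝ}
    (ha : a ∈ I) (hf : ∀ x ∈ I, HasDerivAt f (k * f x) x) (hx : x ∈ I) :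
    f x = f a * exp (k * (x - a)) := by
  have hexp (y : ℝ) : HasDerivAt (fun t => exp (-k * t)) (-k * exp (-k * y)) y := by
    simpa [mul_comm] using ((hasDerivAt_id y).const_mul (-k)).exp
  have hconst : ∀ y ∈ I, HasDerivAt (fun t => f t * exp (-k * t)) 0 y := fun y hy => by
    simpa using (hf y hy).mul_logDeriv (hexp y)
  have h := hI.norm_image_sub_le_of_norm_hasDerivWithin_le (C := 0)
    (fun y hy => (hconst y hy).hasDerivWithinAt) (fun _ _ => by simp) ha hx
  have hfa : f x * exp (-k * x) = f a * exp (-k * a) := by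
    simpa [sub_eq_zero] using h
  calc f x = f x * exp (-k * x) * exp (k * x) := by
        rw [mul_assoc, ← exp_add]; ring_nf; simp
    _ = f a * exp (k * (x - a)) := by
        rw [hfa, mul_assoc, ← exp_add]; ring_nf

end LogDeriv

theorem hasDerivAt_sqrt_quadratic {p q x : ℝ} (hQ : 0 < x ^ 2 + p * x + q) :
    HasDerivAt (fun y => √(y ^ 2 + p * y + q)) ((2 * x + p) / (2 * √(x ^ 2 + p * x + q))) x := by
  have h : HasDerivAt (fun y => y ^ 2 + p * y + q) (2 * x + p) x := by
    simpa using (((hasDerivAt_id x).pow 2).add ((hasDerivAt_id x).const_mul p)).add_const q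
  exact h.sqrt hQ.ne'

theorem hasDerivAt_euler_substitution {p q x : ℝ} (hQ : 0 < x ^ 2 + p * x + q) :
    HasDerivAt (fun y => 2 * √(y ^ 2 + p * y + q) + 2 * y + p)
      (1 / √(x ^ 2 + p * x + q) * (2 * √(x ^ 2 + p * x + q) + 2 * x + p)) x := by
  have hr := (sqrt_pos.mpr hQ).ne'
  refine ((((hasDerivAt_sqrt_quadratic hQ).const_mul 2).add
    ((hasDerivAt_id x).const_mul 2)).add_const p).congr_deriv ?_
  generalize √(x ^ 2 + p * x + q) = r at hr ⊢
  field_simp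
  ring

/-- The paper's `β₁` with `σ = √a₁`, `x₀ = φ₀^-`, `p = l₁`, `q = l₂`, `b = b₁`, `l = l₃`. -/
noncomputable def osmosisBeta (p q σ b l x₀ α x : ℝ) : ℝ :=
  (2 * √(x ^ 2 + p * x + q) + 2 * x + p) * (x - x₀) ^ α /
    (2 * σ * √(x ^ 2 + p * x + q) + b * x + l) ^ α

/-- The hypotheses say `σ² = Q x₀` and `b x + l = Q' x₀ (x - x₀) + 2 Q x₀` for
`Q x = x² + p x + q`. -/
theorem osmosisBeta_logDeriv_identity {p q σ b l x₀ α x r : ℝ}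
    (hb : b = 2 * x₀ + p) (hl : l = 2 * q + x₀ * p) (hσ : σ ^ 2 = x₀ ^ 2 + p * x₀ + q)
    (hα : α * σ = x₀) (hr : r ^ 2 = x ^ 2 + p * x + q) (hr0 : r ≠ 0) (hx : x - x₀ ≠ 0)
    (hD : 2 * σ * r + b * x + l ≠ 0) :
    1 / r + α * (1 / (x - x₀)) - α * ((σ * (2 * x + p) / r + b) / (2 * σ * r + b * x + l)) =
      x / ((x - x₀) * r) := by
  have hkey : r * (2 * σ * r + b * x + l) - (x - x₀) * (σ * (2 * x + p) + b * r) =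
      σ * (2 * σ * r + b * x + l) := by
    subst hb hl
    linear_combination 2 * σ * hr - 2 * r * hσ
  generalize 2 * σ * r + b * x + l = D at hD hkey ⊢
  field_simp
  linear_combination α * hkey + D * hα

theorem hasDerivAt_osmosisBeta {p q σ b l x₀ α x : ℝ}
    (hb : b = 2 * x₀ + p) (hl : l = 2 * q + x₀ * p) (hσ : σ ^ 2 = x₀ ^ 2 + p * x₀ + q)
    (hα : α * σ = x₀) (hQ : 0 < x ^ 2 + p * x + q) (hx : x₀ < x)
    (hD : 0 < 2 * σ * √(x ^ 2 + p * x + q) + b * x + l) :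
    HasDerivAt (osmosisBeta p q σ b l x₀ α)
      (x / ((x - x₀) * √(x ^ 2 + p * x + q)) * osmosisBeta p q σ b l x₀ α x) x := by
  have hr := sqrt_pos.mpr hQ
  have hP : HasDerivAt (fun y => y - x₀) (1 / (x - x₀) * (x - x₀)) x :=
    ((hasDerivAt_id x).sub_const x₀).congr_deriv (by field_simp [(sub_pos.mpr hx).ne'])
  have hD' : HasDerivAt (fun y => 2 * σ * √(y ^ 2 + p * y + q) + b * y + l)
      ((σ * (2 * x + p) / √(x ^ 2 + p * x + q) + b) / (2 * σ * √(x ^ 2 + p * x + q) + b * x + l) *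
        (2 * σ * √(x ^ 2 + p * x + q) + b * x + l)) x := by
    refine ((((hasDerivAt_sqrt_quadratic hQ).const_mul (2 * σ)).add
      ((hasDerivAt_id x).const_mul b)).add_const l).congr_deriv ?_
    rw [div_mul_cancel₀ _ hD.ne']
    field_simp
  rw [← osmosisBeta_logDeriv_identity hb hl hσ hα (sq_sqrt hQ.le) hr.ne' (sub_pos.mpr hx).ne'
    hD.ne']
  exact ((hasDerivAt_euler_substitution hQ).mul_logDeriv
    (hP.rpow_const_logDeriv (sub_pos.mpr hx) α)).div_logDeriv
    (hD'.rpow_const_logDeriv hD α) (rpow_pos_of_pos hD α).ne'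

theorem hasDerivAt_osmosisBeta_comp {p q σ b l x₀ α ε ξ : ℝ} {φ : ℝ → ℝ}
    (hb : b = 2 * x₀ + p) (hl : l = 2 * q + x₀ * p) (hσ : σ ^ 2 = x₀ ^ 2 + p * x₀ + q)
    (hα : α * σ = x₀) (hQ : 0 < φ ξ ^ 2 + p * φ ξ + q) (hx : x₀ < φ ξ) (hφ : φ ξ ≠ 0)
    (hD : 0 < 2 * σ * √(φ ξ ^ 2 + p * φ ξ + q) + b * φ ξ + l)
    (horb : HasDerivAt φ (ε * (φ ξ - x₀) * √(φ ξ ^ 2 + p * φ ξ + q) / (2 * φ ξ)) ξ) :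
    HasDerivAt (osmosisBeta p q σ b l x₀ α ∘ φ)
      (ε / 2 * (osmosisBeta p q σ b l x₀ α ∘ φ) ξ) ξ := by
  have hr := (sqrt_pos.mpr hQ).ne'
  have hP := (sub_pos.mpr hx).ne'
  refine ((hasDerivAt_osmosisBeta hb hl hσ hα hQ hx hD).comp ξ horb).congr_deriv ?_
  simp only [Function.comp_apply]
  generalize √(φ ξ ^ 2 + p * φ ξ + q) = r at hr ⊢
  field_simp

theorem osmosis_K22_kink_like_c_neg_g_nonpos_general
    (c g : ℝ) (hc : c < 0) (hg1 : -2 * c ^ 2 / 9 < g)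
    (ε : ℝ)
    (s φ0m l1 l2 l3 a1 b1 α1 : ℝ)
    (hs : s = Real.sqrt (c ^ 2 + 4 * g))
    (hφ0m : φ0m = (c - s) / 2)
    (hl1 : l1 = -(c + 3 * s) / 3)
    (hl2 : l2 = (c ^ 2 + 6 * g - c * s) / 6)
    (hl3 : l3 = (2 / 3) * (c ^ 2 + 6 * g - c * s))
    (ha1 : a1 = c ^ 2 + 4 * g - c * s)
    (hb1 : b1 = (2 * c - 6 * s) / 3)
    (hα1 : α1 = (c - s) / (2 * Real.sqrt a1))
    (β₁ : ℝ → ℝ)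
    (hβ₁ : ∀ x : ℝ, β₁ x =
      (2 * Real.sqrt (x ^ 2 + l1 * x + l2) + 2 * x + l1) * (x - φ0m) ^ α1 /
        (2 * Real.sqrt a1 * Real.sqrt (x ^ 2 + l1 * x + l2) + b1 * x + l3) ^ α1)
    (d : ℝ)
    (I : Set ℝ) (hIconv : Convex ℝ I) (h0I : (0:ℝ) ∈ I)
    (φ : ℝ → ℝ) (hφ0 : φ 0 = d)
    (hrange : ∀ ξ ∈ I, φ0m < φ ξ ∧ φ ξ < c / 2)
    (hq : ∀ ξ ∈ I, 0 < (φ ξ) ^ 2 + l1 * φ ξ + l2)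
    (hden : ∀ ξ ∈ I,
      0 < 2 * Real.sqrt a1 * Real.sqrt ((φ ξ) ^ 2 + l1 * φ ξ + l2) + b1 * φ ξ + l3)
    (horb : ∀ ξ ∈ I, HasDerivAt φ
      (ε * (φ ξ - φ0m) * Real.sqrt ((φ ξ) ^ 2 + l1 * φ ξ + l2) / (2 * φ ξ)) ξ) :
    ∀ ξ ∈ I, β₁ (φ ξ) = β₁ d * Real.exp (ε * ξ / 2) := by
  have hdisc : 0 < c ^ 2 + 4 * g := by nlinarith
  have hs2 : s ^ 2 = c ^ 2 + 4 * g := hs ▸ sq_sqrt hdisc.le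
  have hs0 : 0 < s := hs ▸ sqrt_pos.mpr hdisc
  have ha1pos : 0 < a1 := by rw [ha1]; nlinarith
  have hσ : √a1 ^ 2 = φ0m ^ 2 + l1 * φ0m + l2 := by
    rw [sq_sqrt ha1pos.le, ha1, hφ0m, hl1, hl2]
    linear_combination (-3 / 4) * hs2
  have hα : α1 * √a1 = φ0m := by
    rw [hα1, hφ0m]
    field_simp [(sqrt_pos.mpr ha1pos).ne']
  have hb : b1 = 2 * φ0m + l1 := by rw [hb1, hφ0m, hl1]; ring
  have hl : l3 = 2 * l2 + φ0m * l1 := by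
    rw [hl3, hl2, hφ0m, hl1]
    linear_combination (-1 / 2) * hs2
  obtain rfl : β₁ = osmosisBeta l1 l2 (√a1) b1 l3 φ0m α1 := funext hβ₁
  have hderiv (ξ : ℝ) (hξ : ξ ∈ I) :
      HasDerivAt (osmosisBeta l1 l2 (√a1) b1 l3 φ0m α1 ∘ φ)
        (ε / 2 * (osmosisBeta l1 l2 (√a1) b1 l3 φ0m α1 ∘ φ) ξ) ξ :=
    hasDerivAt_osmosisBeta_comp hb hl hσ hα (hq ξ hξ) (hrange ξ hξ).1
      (show φ ξ < 0 by linarith [(hrange ξ hξ).2]).ne (hden ξ hξ) (horb ξ hξ)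
  intro ξ hξ
  simpa [hφ0, mul_div_right_comm] using
    hIconv.eq_mul_exp_of_hasDerivAt_mul_self h0I hderiv hξ

/-- kink-like (ε = −1, eq. (3.11)) and antikink-like (ε = 1, eq. (3.12))
wave solutions of the osmosis K(2,2) equation for `c < 0`, `−2c²/9 < g ≤ 0`:
a solution of the orbit equation through `d ∈ (φ₀^-, c/2)` satisfies
`β₁(φ(ξ)) = β₁(d)·exp(εξ/2)`. -/
theorem osmosis_K22_kink_like_c_neg_g_nonpos
    (c g : ℝ) (hc : c < 0) (hg1 : -2 * c ^ 2 / 9 < g) (hg2 : g ≤ 0)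
    (ε : ℝ) (hε : ε = -1 ∨ ε = 1)
    (s φ0m l1 l2 l3 a1 b1 α1 : ℝ)
    (hs : s = Real.sqrt (c ^ 2 + 4 * g))
    (hφ0m : φ0m = (c - s) / 2)
    (hl1 : l1 = -(c + 3 * s) / 3)
    (hl2 : l2 = (c ^ 2 + 6 * g - c * s) / 6)
    (hl3 : l3 = (2 / 3) * (c ^ 2 + 6 * g - c * s))
    (ha1 : a1 = c ^ 2 + 4 * g - c * s)
    (hb1 : b1 = (2 * c - 6 * s) / 3)
    (hα1 : α1 = (c - s) / (2 * Real.sqrt a1))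
    (β₁ : ℝ → ℝ)
    (hβ₁ : ∀ x : ℝ, β₁ x =
      (2 * Real.sqrt (x ^ 2 + l1 * x + l2) + 2 * x + l1) * (x - φ0m) ^ α1 /
        (2 * Real.sqrt a1 * Real.sqrt (x ^ 2 + l1 * x + l2) + b1 * x + l3) ^ α1)
    (d : ℝ) (hd : φ0m < d ∧ d < c / 2)
    (I : Set ℝ) (hI : IsOpen I) (hIconv : Convex ℝ I) (h0I : (0:ℝ) ∈ I)
    (φ : ℝ → ℝ) (hφ0 : φ 0 = d)
    (hrange : ∀ ξ ∈ I, φ0m < φ ξ ∧ φ ξ < c / 2)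
    (hq : ∀ ξ ∈ I, 0 < (φ ξ) ^ 2 + l1 * φ ξ + l2)
    (hnum : ∀ ξ ∈ I, 0 < 2 * Real.sqrt ((φ ξ) ^ 2 + l1 * φ ξ + l2) + 2 * φ ξ + l1)
    (hden : ∀ ξ ∈ I,
      0 < 2 * Real.sqrt a1 * Real.sqrt ((φ ξ) ^ 2 + l1 * φ ξ + l2) + b1 * φ ξ + l3)
    (horb : ∀ ξ ∈ I, HasDerivAt φ
      (ε * (φ ξ - φ0m) * Real.sqrt ((φ ξ) ^ 2 + l1 * φ ξ + l2) / (2 * φ ξ)) ξ) :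
    ∀ ξ ∈ I, β₁ (φ ξ) = β₁ d * Real.exp (ε * ξ / 2) :=
  osmosis_K22_kink_like_c_neg_g_nonpos_general c g hc hg1 ε s φ0m l1 l2 l3 a1 b1 α1 hs hφ0m hl1 hl2
    hl3 ha1 hb1 hα1 β₁ hβ₁ d I hIconv h0I φ hφ0 hrange hq hden horb
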